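/- arXiv:math/9603206 — 2 statements merged into one kernel-verified Lean document; each statement's English description precedes it below -/
import Mathlib

section
/- (GCH lower bound) Assume GCH. If λ is a singular strong limit cardinal of cofinality ω, then d_{<ℵ₁}(λ) ≥ λ⁺; combined with the upper bound, d_{<ℵ₁}(λ) = λ⁺ under GCH. -/
/-!
If `F` had size at most `λ`, the cofinality `ω` would write it as a union of
countably many pieces `Fₙ` of size `< λ`. As `λ` is a strong limit, `2 ^ |Fₙ| < λ`, so on
each of countably many disjoint copies of `λ` some two points cannot be told apart by `Fₙ`.
The countable partial function that separates every such pair then extends to no member of `F`.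
Under GCH the family of all functions has size `2 ^ λ = λ⁺`, which gives the matching upper bound.
-/

open Cardinal

noncomputable def boxDensity (κ lam : Cardinal.{0}) : Cardinal.{0} :=
  sInf { c | ∃ F : Set (Quotient.out lam → Bool), #F = c ∧
    ∀ a : Set (Quotient.out lam), #a < κ → ∀ g : ↥a → Bool,
      ∃ f ∈ F, ∀ x : ↥a, f x.1 = g x }

/-- The Generalized Continuum Hypothesis. -/
def GCH : Prop := ∀ μ : Cardinal.{0}, ℵ₀ ≤ μ → 2 ^ μ = Order.succ μ

universe u

def IsBoxDense {X : Type u} (κ : Cardinal.{u}) (F : Set (X → Bool)) : Prop :=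
  ∀ a : Set X, #a < κ → ∀ g : a → Bool, ∃ f ∈ F, ∀ x : a, f x = g x

theorem boxDensity_eq_sInf (κ lam : Cardinal.{0}) :
    boxDensity κ lam = sInf {c | ∃ F : Set (lam.out → Bool), #F = c ∧ IsBoxDense κ F} :=
  rfl

theorem isBoxDense_univ {X : Type u} (κ : Cardinal.{u}) :
    IsBoxDense κ (Set.univ : Set (X → Bool)) := by
  classical
  intro a _ g
  exact ⟨fun x => if h : x ∈ a then g ⟨x, h⟩ else false, trivial, fun x => dif_pos x.2⟩

theorem boxDensity_le_two_power (κ lam : Cardinal.{0}) : boxDensity κ lam ≤ 2 ^ lam := by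
  rw [boxDensity_eq_sInf]
  refine csInf_le' ⟨Set.univ, ?_, isBoxDense_univ κ⟩
  rw [mk_univ, ← power_def, mk_bool, mk_out]

theorem le_boxDensity {κ lam c : Cardinal.{0}}
    (h : ∀ F : Set (lam.out → Bool), IsBoxDense κ F → c ≤ #F) : c ≤ boxDensity κ lam := by
  rw [boxDensity_eq_sInf]
  refine le_csInf ⟨_, Set.univ, rfl, isBoxDense_univ κ⟩ ?_
  rintro _ ⟨F, rfl, hF⟩
  exact h F hF

theorem not_isBoxDense_of_forall_exists_eq {X : Type u} {F : Set (X → Bool)} (a b : ℕ → X)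
    (hab : ∀ n m, a n ≠ b m) (hF : ∀ f ∈ F, ∃ n, f (a n) = f (b n)) :
    ¬ IsBoxDense ℵ₁ F := by
  classical
  intro hdense
  have hcount : #(Set.range a ∪ Set.range b : Set X) < ℵ₁ :=
    (le_aleph0_iff_set_countable.2
      ((Set.countable_range a).union (Set.countable_range b))).trans_lt aleph0_lt_aleph_one
  obtain ⟨f, hf, hfg⟩ := hdense _ hcount fun x => decide (x.1 ∈ Set.range b)
  obtain ⟨n, hn⟩ := hF f hf
  have ha : f (a n) = false := by
    simpa [fun m => (hab n m).symm] using hfg ⟨a n, Or.inl ⟨n, rfl⟩⟩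
  have hb : f (b n) = true := by simpa using hfg ⟨b n, Or.inr ⟨n, rfl⟩⟩
  simp [ha, hb] at hn

theorem exists_ne_forall_comp_eq_of_two_power_lt {X Y : Type u} (G : Set (X → Bool))
    (e : Y → X) (h : 2 ^ #G < #Y) : ∃ y₁ y₂, y₁ ≠ y₂ ∧ ∀ f ∈ G, f (e y₁) = f (e y₂) := by
  have hψ : ¬ Function.Injective fun (y : Y) (f : G) => f.1 (e y) := fun hinj =>
    (mk_le_of_injective hinj).not_gt (by simpa using h)
  obtain ⟨y₁, y₂, heq, hne⟩ := Function.not_injective_iff.1 hψ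
  exact ⟨y₁, y₂, hne, fun f hf => congrFun heq ⟨f, hf⟩⟩

theorem exists_pairs_of_two_power_lt {X : Type u} (hX : ℵ₀ ≤ #X) (G : ℕ → Set (X → Bool))
    (hG : ∀ n, 2 ^ #(G n) < #X) :
    ∃ a b : ℕ → X, (∀ n m, a n ≠ b m) ∧ ∀ n, ∀ f ∈ G n, f (a n) = f (b n) := by
  obtain ⟨π⟩ : Nonempty (X × ℕ ≃ X) := lift_mk_eq'.1 (by simp [mul_aleph0_eq hX])
  choose y₁ y₂ hne hagree using fun n =>
    exists_ne_forall_comp_eq_of_two_power_lt (G n) (fun x => π (x, n)) (hG n)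
  refine ⟨fun n => π (y₁ n, n), fun n => π (y₂ n, n), fun n m h => ?_, hagree⟩
  obtain ⟨h₁, rfl⟩ := Prod.ext_iff.1 (π.injective h)
  exact hne n h₁

theorem exists_cover_mk_lt_of_cof_eq_aleph0 {α : Type u} {c : Cardinal.{u}} (hα : #α ≤ c)
    (hc : ℵ₀ ≤ c) (hcof : c.ord.cof = ℵ₀) :
    ∃ A : ℕ → Set α, (∀ n, #(A n) < c) ∧ ∀ x, ∃ n, x ∈ A n := by
  obtain ⟨j⟩ : Nonempty (α ↪ c.ord.ToType) := by rwa [← le_def, mk_ord_toType]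
  obtain ⟨T, hT, hTc⟩ := Order.exists_cof_eq c.ord.ToType
  rw [Ordinal.cof_toType, hcof] at hTc
  have : Countable T := mk_le_aleph0_iff.1 hTc.le
  have : Nonempty T := mk_ne_zero_iff.1 (hTc ▸ aleph0_ne_zero)
  obtain ⟨e, he⟩ := exists_surjective_nat T
  have hIic (i : c.ord.ToType) : #(Set.Iic i) < c := by
    rw [← Set.Iio_insert]
    exact mk_insert_le.trans_lt
      (add_lt_of_lt hc (by simpa using mk_Iio_lt i) (one_lt_aleph0.trans_le hc))
  refine ⟨fun n => j ⁻¹' Set.Iic (e n), fun n => (mk_preimage_of_injective _ _ j.injective).trans_lt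
    (hIic _), fun x => ?_⟩
  obtain ⟨b, hbT, hxb⟩ := hT (j x)
  obtain ⟨n, hn⟩ := he ⟨b, hbT⟩
  refine ⟨n, ?_⟩
  simpa [hn] using hxb

theorem lt_mk_of_isBoxDense {X : Type u} (hX : (#X).IsStrongLimit) (hcof : (#X).ord.cof = ℵ₀)
    {F : Set (X → Bool)} (hF : IsBoxDense ℵ₁ F) : #X < #F := by
  by_contra! hle
  obtain ⟨A, hA, hcover⟩ := exists_cover_mk_lt_of_cof_eq_aleph0 hle hX.aleph0_le hcof
  obtain ⟨a, b, hab, hagree⟩ := exists_pairs_of_two_power_lt hX.aleph0_le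
    (fun n => Subtype.val '' A n) fun n => hX.isStrongPrelimit (mk_image_le.trans_lt (hA n))
  refine not_isBoxDense_of_forall_exists_eq a b hab (fun f hf => ?_) hF
  obtain ⟨n, hn⟩ := hcover ⟨f, hf⟩
  exact ⟨n, hagree n f ⟨_, hn, rfl⟩⟩

theorem stmt6_general (hGCH : GCH) (lam : Cardinal.{0}) (hsl : lam.IsStrongLimit)
    (hcof : lam.ord.cof = ℵ₀) :
    Order.succ lam ≤ boxDensity (Cardinal.aleph 1) lam ∧
      boxDensity (Cardinal.aleph 1) lam = Order.succ lam := by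
  have hlow : Order.succ lam ≤ boxDensity ℵ₁ lam := le_boxDensity fun F hF =>
    Order.succ_le_of_lt <|
      (mk_out lam).symm.trans_lt (lt_mk_of_isBoxDense (by rwa [mk_out]) (by rwa [mk_out]) hF)
  have hup : boxDensity ℵ₁ lam ≤ Order.succ lam :=
    hGCH lam hsl.aleph0_le ▸ boxDensity_le_two_power _ _
  exact ⟨hlow, hup.antisymm hlow⟩

theorem stmt6 (hGCH : GCH) (lam : Cardinal.{0}) (hsl : lam.IsStrongLimit)
    (hsing : ℵ₀ < lam) (hcof : lam.ord.cof = ℵ₀) :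
    Order.succ lam ≤ boxDensity (Cardinal.aleph 1) lam ∧
      boxDensity (Cardinal.aleph 1) lam = Order.succ lam :=
  stmt6_general hGCH lam hsl hcof
end

section
/- Assume GCH holds and let κ be an infinite cardinal. For any set A with |A| = κ⁺⁺, the space ^A κ of functions from A to κ with the topology generated by countable box products (basic open sets determined by fixing values on a countable subset of A) has a dense subset of cardinality κ⁺. -/
open Cardinal

/-- The countable-box topology on `^A κ`: generated by the cylinders on countable
subsets of `A`. -/
noncomputable def ctbleBoxTopology (A : Type) (K : Type) : TopologicalSpace (A → K) :=
  TopologicalSpace.generateFrom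
    { s | ∃ (a : Set A) (g : ↥a → K), #a ≤ ℵ₀ ∧ s = { f | ∀ x : ↥a, f x.1 = g x } }

/-!
Engelking–Karłowicz: under GCH, `2 ^ κ⁺ = κ⁺⁺`, so `A` embeds into the power set of a set `L` of
size `κ⁺`. Countably many points of `A` are told apart by their traces on countably many points
`π i` of `L`, and a function on them is recovered from countably many (trace, value) pairs. Hence a
family indexed by `(ℕ → L) × (ℕ → Set ℕ) × (ℕ → K)` agrees with any given function on any
countable set; it has size `(κ⁺) ^ ℵ₀ = κ⁺` since `2 ^ κ = κ⁺`.
-/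

open Set Topology

section CountableBox

variable {A K : Type}

theorem exists_countable_cylinder_subset {U : Set (A → K)}
    (hU : IsOpen[ctbleBoxTopology A K] U) {f : A → K} (hf : f ∈ U) :
    ∃ a : Set A, a.Countable ∧ {g | EqOn g f a} ⊆ U := by
  induction hU generalizing f with
  | basic s hs =>
    obtain ⟨a, c, ha, rfl⟩ := hs
    exact ⟨a, mk_le_aleph0_iff.mp ha, fun g hg x => (hg x.2).trans (hf x)⟩
  | univ => exact ⟨∅, countable_empty, subset_univ _⟩
  | inter s t _ _ ihs iht =>
    obtain ⟨a, ha, has⟩ := ihs hf.1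
    obtain ⟨b, hb, hbt⟩ := iht hf.2
    exact ⟨a ∪ b, ha.union hb, fun g hg =>
      ⟨has fun x hx => hg (.inl hx), hbt fun x hx => hg (.inr hx)⟩⟩
  | sUnion S _ ih =>
    obtain ⟨s, hsS, hfs⟩ := hf
    obtain ⟨a, ha, has⟩ := ih s hsS hfs
    exact ⟨a, ha, has.trans (subset_sUnion_of_mem hsS)⟩

theorem dense_ctbleBoxTopology_of_forall_countable {F : Set (A → K)}
    (hF : ∀ f : A → K, ∀ a : Set A, a.Countable → ∃ g ∈ F, EqOn g f a) :
    @Dense _ (ctbleBoxTopology A K) F := by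
  let _ := ctbleBoxTopology A K
  refine dense_iff_inter_open.mpr fun U hU ⟨f, hf⟩ => ?_
  obtain ⟨a, ha, haU⟩ := exists_countable_cylinder_subset hU hf
  obtain ⟨g, hgF, hga⟩ := hF f a ha
  exact ⟨g, haU hga, hgF⟩

end CountableBox

section EngelkingKarlowicz

variable {A K L : Type}

/-- Decodes `x` from its trace `π ⁻¹' ι x` on the points `π i`, by looking the trace up in the
table `n ↦ (σ n, e n)`. -/
noncomputable def ekFun (ι : A → Set L) (π : ℕ → L) (σ : ℕ → Set ℕ) (e : ℕ → K) (x : A) : K :=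
  e (Classical.epsilon fun n => σ n = π ⁻¹' ι x)

theorem exists_seq_separating_traces {ι : A → Set L} (hι : Function.Injective ι) [Nonempty L]
    (u : ℕ → A) :
    ∃ π : ℕ → L, ∀ m n, π ⁻¹' ι (u m) = π ⁻¹' ι (u n) → u m = u n := by
  have hsep : ∀ m n, ∃ y : L, u m ≠ u n → (y ∈ ι (u m) ↔ y ∉ ι (u n)) := by
    intro m n
    by_cases h : ι (u m) = ι (u n)
    · exact ⟨Classical.arbitrary L, fun hne => absurd (hι h) hne⟩
    · obtain ⟨y, hy⟩ := not_forall.mp (mt Set.ext h)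
      exact ⟨y, fun _ => by tauto⟩
  choose sep hsep using hsep
  refine ⟨fun k => sep k.unpair.1 k.unpair.2, fun m n htr => by_contra fun hne => ?_⟩
  have := congrArg (Nat.pair m n ∈ ·) htr
  simp only [mem_preimage, Nat.unpair_pair, eq_iff_iff] at this
  exact iff_not_self (this.symm.trans (hsep m n hne))

theorem exists_ekFun_eq {ι : A → Set L} (hι : Function.Injective ι) [Nonempty L]
    (f : A → K) (u : ℕ → A) :
    ∃ π σ e, ∀ m, ekFun ι π σ e (u m) = f (u m) := by
  obtain ⟨π, hπ⟩ := exists_seq_separating_traces hι u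
  refine ⟨π, fun n => π ⁻¹' ι (u n), fun n => f (u n), fun m => ?_⟩
  have hspec := Classical.epsilon_spec (p := fun n => π ⁻¹' ι (u n) = π ⁻¹' ι (u m)) ⟨m, rfl⟩
  exact congrArg f (hπ _ _ hspec)

def ekFamily (ι : A → Set L) : Set (A → K) :=
  range fun p : (ℕ → L) × (ℕ → Set ℕ) × (ℕ → K) => ekFun ι p.1 p.2.1 p.2.2

theorem mk_ekFamily_le (ι : A → Set L) :
    #(ekFamily (K := K) ι) ≤ #L ^ ℵ₀ * 2 ^ ℵ₀ * #K ^ ℵ₀ := by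
  refine mk_range_le.trans_eq ?_
  simp [mk_set, mul_assoc]

theorem exists_ekFamily_eqOn [Nonempty K] [Nonempty L] {ι : A → Set L}
    (hι : Function.Injective ι) (f : A → K) {a : Set A} (ha : a.Countable) :
    ∃ g ∈ ekFamily ι, EqOn g f a := by
  rcases a.eq_empty_or_nonempty with rfl | hne
  · exact ⟨_, mem_range_self (Classical.arbitrary _), eqOn_empty _ _⟩
  obtain ⟨u, rfl⟩ := ha.exists_eq_range hne
  obtain ⟨π, σ, e, h⟩ := exists_ekFun_eq hι f u
  exact ⟨_, ⟨(π, σ, e), rfl⟩, forall_mem_range.mpr h⟩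

end EngelkingKarlowicz

theorem exists_dense_ctbleBoxTopology_mk_le {A K L : Type} [Nonempty K] [Nonempty L]
    (hA : #A ≤ 2 ^ #L) :
    ∃ F : Set (A → K), #F ≤ #L ^ ℵ₀ * 2 ^ ℵ₀ * #K ^ ℵ₀ ∧ @Dense _ (ctbleBoxTopology A K) F := by
  obtain ⟨ι⟩ := (le_def A (Set L)).mp (mk_set.symm ▸ hA)
  exact ⟨ekFamily ι, mk_ekFamily_le ι, dense_ctbleBoxTopology_of_forall_countable
    fun f _ ha => exists_ekFamily_eqOn ι.injective f ha⟩

theorem Cardinal.exists_superset_mk_eq {α : Type*} {s : Set α} {c : Cardinal}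
    (hs : #s ≤ c) (hc : c ≤ #α) (hc₀ : ℵ₀ ≤ c) : ∃ t, s ⊆ t ∧ #t = c := by
  obtain ⟨r, hr⟩ := le_mk_iff_exists_set.mp hc
  refine ⟨s ∪ r, subset_union_left, le_antisymm ?_ (hr ▸ mk_le_mk_of_subset subset_union_right)⟩
  calc #(s ∪ r : Set α) ≤ #s + #r := mk_union_le s r
    _ ≤ c + c := add_le_add hs hr.le
    _ = c := add_eq_self hc₀

theorem GCH.power_aleph0_le_succ (hGCH : GCH) {κ c : Cardinal.{0}} (hκ : ℵ₀ ≤ κ)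
    (hc : c ≤ Order.succ κ) : c ^ ℵ₀ ≤ Order.succ κ :=
  calc c ^ ℵ₀ ≤ (2 ^ κ) ^ ℵ₀ := power_le_power_right (hGCH κ hκ ▸ hc)
    _ = 2 ^ κ := by rw [← power_mul, mul_aleph0_eq hκ]
    _ = Order.succ κ := hGCH κ hκ

theorem stmt14 (hGCH : GCH) (κ : Cardinal.{0}) (hκ : ℵ₀ ≤ κ) (A : Type)
    (hA : #A = Order.succ (Order.succ κ)) :
    ∃ F : Set (A → Quotient.out κ), #F = Order.succ κ ∧
      @Dense _ (ctbleBoxTopology A (Quotient.out κ)) F := by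
  have hκ' : ℵ₀ ≤ Order.succ κ := hκ.trans (Order.le_succ κ)
  have hK : #κ.out = κ := mk_out κ
  have hL : #(Order.succ κ).out = Order.succ κ := mk_out _
  have : Nonempty κ.out := mk_ne_zero_iff.mp (by rw [hK]; exact (aleph0_pos.trans_le hκ).ne')
  have : Nonempty (Order.succ κ).out :=
    mk_ne_zero_iff.mp (by rw [hL]; exact (aleph0_pos.trans_le hκ').ne')
  obtain ⟨F, hFcard, hF⟩ := exists_dense_ctbleBoxTopology_mk_le (A := A) (K := κ.out)
    (L := (Order.succ κ).out) (by rw [hA, hL, hGCH _ hκ'])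
  have hFκ : #F ≤ Order.succ κ := by
    refine hFcard.trans (mul_le_of_le hκ' (mul_le_of_le hκ' ?_ ?_) ?_) <;>
      refine hGCH.power_aleph0_le_succ hκ ?_
    exacts [hL.le, (natCast_lt_aleph0 (n := 2)).le.trans hκ', hK.trans_le (Order.le_succ κ)]
  have hsize : Order.succ κ ≤ #(A → κ.out) := by
    calc Order.succ κ ≤ #A := hA ▸ Order.le_succ _
      _ ≤ #κ.out ^ #A := (cantor' _ (by rw [hK]; exact one_lt_aleph0.trans_le hκ)).le
      _ = #(A → κ.out) := by simp
  obtain ⟨F', hFF', hF'⟩ := exists_superset_mk_eq hFκ hsize hκ'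
  let _ := ctbleBoxTopology A κ.out
  exact ⟨F', hF', hF.mono hFF'⟩
end
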